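/- Let F be a field of characteristic 2, let m be an odd positive integer, and let ω ∈ F be a primitive m-th root of unity. Then for every multivariate polynomial P ∈ F[X₁,…,Xₙ] of total degree strictly less than m and all vectors x, v ∈ Fⁿ, we have ∑_{i=1}^{m} P(ω^i·x₁ + v₁, …, ω^i·xₙ + vₙ) = P(v₁, …, vₙ). (This is the key interpolation identity underlying the Cook–Mertz Tree Evaluation algorithm.) -/

import Mathlib

/-!
Along the line `t ↦ t • x + v` the polynomial `P` becomes a univariate polynomial `Q` of degree
`< m`. Summing `Q` over the `m`-th roots of unity kills every monomial `t ^ k` with `0 < k < m`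
(a geometric sum of the root of unity `ω ^ k ≠ 1`) and counts the constant term `Q 0 = P v`
exactly `m` times; and `m = 1` in characteristic `2` since `m` is odd.
-/

open Finset Polynomial

namespace IsPrimitiveRoot

variable {R : Type*} [CommRing R] [IsDomain R] {ω : R} {m : ℕ}

theorem geom_sum_pow_eq_zero (hω : IsPrimitiveRoot ω m) {k : ℕ} (hk : ¬m ∣ k) :
    ∑ i ∈ range m, (ω ^ k) ^ i = 0 := by
  refine eq_zero_of_ne_zero_of_mul_left_eq_zero (sub_ne_zero_of_ne (a := 1) (b := ω ^ k) ?_) ?_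
  · exact fun h => hk <| (hω.pow_eq_one_iff_dvd k).mp h.symm
  · rw [mul_neg_geom_sum, ← pow_mul, mul_comm, pow_mul, hω.pow_eq_one, one_pow, sub_self]

theorem sum_eval_pow_eq (hω : IsPrimitiveRoot ω m) {Q : R[X]} (hQ : Q.natDegree < m) :
    ∑ i ∈ range m, Q.eval (ω ^ i) = m * Q.eval 0 := by
  have hm : 0 < m := (Nat.zero_le _).trans_lt hQ
  rw [← coeff_zero_eq_eval_zero]
  simp_rw [eval_eq_sum_range' hQ, ← pow_mul', pow_mul]
  rw [sum_comm, sum_eq_single_of_mem 0 (mem_range.mpr hm)]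
  · simp [mul_comm]
  · intro k hk hk0
    rw [← mul_sum, hω.geom_sum_pow_eq_zero
      (Nat.not_dvd_of_pos_of_lt (Nat.pos_of_ne_zero hk0) (mem_range.mp hk)), mul_zero]

end IsPrimitiveRoot

theorem Finset.sum_Icc_one_pow_eq_sum_range {M β : Type*} [Monoid M] [AddCommMonoid β]
    {ω : M} {m : ℕ} (hω : ω ^ m = 1) (f : M → β) :
    ∑ i ∈ Icc 1 m, f (ω ^ i) = ∑ i ∈ range m, f (ω ^ i) := by
  rw [← Finset.Ico_add_one_right_eq_Icc, sum_Ico_eq_sum_range, Nat.add_sub_cancel]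
  rcases m with _ | m
  · simp
  · rw [sum_range_succ, sum_range_succ', add_comm 1, hω, ← pow_zero ω]
    simp only [add_comm 1]

namespace MvPolynomial

variable {R σ : Type*} [CommSemiring R]

theorem eval_polynomial_aeval (f : σ → R[X]) (t : R) (P : MvPolynomial σ R) :
    (aeval f P).eval t = eval (fun j => (f j).eval t) P := by
  rw [← Polynomial.coe_aeval_eq_eval, comp_aeval_apply, aeval_eq_eval]

theorem natDegree_aeval_le_totalDegree_mul (f : σ → R[X]) {d : ℕ}
    (hf : ∀ j, (f j).natDegree ≤ d) (P : MvPolynomial σ R) :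
    (aeval f P).natDegree ≤ P.totalDegree * d := by
  classical
  conv_lhs => rw [P.as_sum, map_sum]
  refine natDegree_sum_le_of_forall_le _ _ fun s hs => ?_
  rw [aeval_monomial, Finsupp.prod]
  calc _ ≤ (∏ j ∈ s.support, f j ^ s j).natDegree := natDegree_C_mul_le _ _
    _ ≤ ∑ j ∈ s.support, s j * d :=
        (natDegree_prod_le _ _).trans <| sum_le_sum fun j _ => natDegree_pow_le_of_le _ (hf j)
    _ ≤ P.totalDegree * d := by
        rw [← sum_mul]
        exact Nat.mul_le_mul_right _ (le_totalDegree hs)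

end MvPolynomial

theorem stmt_2_general (F : Type*) [Field F] (hchar : ringChar F = 2) (m : ℕ)
    (hodd : Odd m) (ω : F) (hω : IsPrimitiveRoot ω m)
    (n : ℕ) (P : MvPolynomial (Fin n) F) (hP : P.totalDegree < m)
    (x v : Fin n → F) :
    ∑ i ∈ Finset.Icc 1 m,
        MvPolynomial.eval (fun j => ω ^ i * x j + v j) P
      = MvPolynomial.eval v P := by
  have := ringChar.of_eq hchar
  set L : Fin n → F[X] := fun j => C (x j) * X + C (v j)
  set Q := MvPolynomial.aeval L P
  have hQ (t : F) : Q.eval t = MvPolynomial.eval (fun j => t * x j + v j) P := by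
    rw [MvPolynomial.eval_polynomial_aeval]
    simp only [L, eval_add, eval_mul, eval_C, eval_X, mul_comm (x _)]
  have hdeg : Q.natDegree < m :=
    (MvPolynomial.natDegree_aeval_le_totalDegree_mul (d := 1) L (fun _ => natDegree_linear_le)
      P).trans_lt (by rwa [mul_one])
  have hm : (m : F) = 1 := by
    rw [CharTwo.natCast_eq_ite, if_neg (Nat.not_even_iff_odd.mpr hodd)]
  simp_rw [← hQ]
  rw [sum_Icc_one_pow_eq_sum_range hω.pow_eq_one (eval · Q), hω.sum_eval_pow_eq hdeg, hm,
    one_mul, hQ]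
  simp

theorem stmt_2 (F : Type*) [Field F] (hchar : ringChar F = 2) (m : ℕ)
    (hm : 0 < m) (hodd : Odd m) (ω : F) (hω : IsPrimitiveRoot ω m)
    (n : ℕ) (P : MvPolynomial (Fin n) F) (hP : P.totalDegree < m)
    (x v : Fin n → F) :
    ∑ i ∈ Finset.Icc 1 m,
        MvPolynomial.eval (fun j => ω ^ i * x j + v j) P
      = MvPolynomial.eval v P :=
  stmt_2_general F hchar m hodd ω hω n P hP x v
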